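/- A coalgebra C over a field K is right quasi-co-Frobenius (right QcF) if and only if C is a right torsionless module, i.e. there exists a monomorphism of right C*-modules from C into a direct product (C*)^I of copies of C* for some index set I. -/

import Mathlib

open TensorProduct LinearMap MulOpposite Coalgebra

noncomputable section

/-- The dual algebra `C* = Hom_K(C, K)` of a coalgebra `C`, with the convolution product. -/
def DualAlg (K C : Type) [Field K] [AddCommGroup C] [Module K C] : Type := C →ₗ[K] K

namespace DualAlg

variable (K C : Type) [Field K] [AddCommGroup C] [Module K C]

instance : AddCommGroup (DualAlg K C) := inferInstanceAs (AddCommGroup (C →ₗ[K] K))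
instance : Module K (DualAlg K C) := inferInstanceAs (Module K (C →ₗ[K] K))

variable {K C}

/-- View an element of the dual algebra as a linear map. -/
def toLin (f : DualAlg K C) : C →ₗ[K] K := f

/-- View a linear map as an element of the dual algebra. -/
def ofLin (f : C →ₗ[K] K) : DualAlg K C := f

instance : FunLike (DualAlg K C) C K where
  coe f := f.toLin
  coe_injective := fun _ _ h => DFunLike.coe_injective (F := C →ₗ[K] K) h

@[ext] lemma ext {f g : DualAlg K C} (h : ∀ c, f c = g c) : f = g := DFunLike.ext _ _ h

@[simp] lemma toLin_apply (f : DualAlg K C) (c : C) : f.toLin c = f c := rfl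
@[simp] lemma ofLin_apply (f : C →ₗ[K] K) (c : C) : (ofLin f : DualAlg K C) c = f c := rfl
@[simp] lemma add_apply (f g : DualAlg K C) (c : C) : (f + g) c = f c + g c := rfl
@[simp] lemma zero_apply (c : C) : (0 : DualAlg K C) c = 0 := rfl
@[simp] lemma smul_apply (k : K) (f : DualAlg K C) (c : C) : (k • f) c = k * f c := rfl

variable [Coalgebra K C]

/-- The convolution product on the dual of a coalgebra. -/
def conv (f g : DualAlg K C) : DualAlg K C :=
  ofLin (LinearMap.mul' K K ∘ₗ TensorProduct.map f.toLin g.toLin ∘ₗ Coalgebra.comul)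

lemma conv_repr (f g : DualAlg K C) (c : C) {ι : Type*} (r : Coalgebra.Repr K c ι) :
    conv f g c = ∑ i ∈ r.index, f (r.left i) * g (r.right i) := by
  show LinearMap.mul' K K (TensorProduct.map f.toLin g.toLin (Coalgebra.comul c)) = _
  rw [← r.eq]
  simp [map_sum]

instance : Ring (DualAlg K C) :=
  { (inferInstance : AddCommGroup (DualAlg K C)) with
    mul := conv
    one := ofLin Coalgebra.counit
    mul_assoc := by
      intro f g h
      ext c
      show conv (conv f g) h c = conv f (conv g h) c
      classical
      set r := Coalgebra.Repr.arbitrary K c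
      set a₁ : (i : C × C) → Coalgebra.Repr K (r.left i) (C × C) := fun i => Coalgebra.Repr.arbitrary K _
      set a₂ : (i : C × C) → Coalgebra.Repr K (r.right i) (C × C) := fun i => Coalgebra.Repr.arbitrary K _
      have key := Coalgebra.sum_map_tmul_tmul_eq (f.toLin) (g.toLin) (h.toLin) c
        (repr := r) (a₁ := a₁) (a₂ := a₂)
      have := congrArg (fun z => (LinearMap.mul' K K ∘ₗ (LinearMap.mul' K K).lTensor K) z) key
      simp only [map_sum, LinearMap.coe_comp, Function.comp_apply, LinearMap.lTensor_tmul,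
        LinearMap.mul'_apply] at this
      rw [conv_repr _ _ _ r, conv_repr _ _ _ r]
      calc ∑ i ∈ r.index, conv f g (r.left i) * h (r.right i)
          = ∑ i ∈ r.index, ∑ j ∈ (a₁ i).index,
              f ((a₁ i).left j) * (g ((a₁ i).right j) * h (r.right i)) := by
            refine Finset.sum_congr rfl fun i _ => ?_
            rw [conv_repr _ _ _ (a₁ i), Finset.sum_mul]
            exact Finset.sum_congr rfl fun j _ => mul_assoc _ _ _
        _ = ∑ i ∈ r.index, ∑ j ∈ (a₂ i).index,
              f (r.left i) * (g ((a₂ i).left j) * h ((a₂ i).right j)) := this.symm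
        _ = ∑ i ∈ r.index, f (r.left i) * conv g h (r.right i) := by
            refine Finset.sum_congr rfl fun i _ => ?_
            rw [conv_repr _ _ _ (a₂ i), Finset.mul_sum]
    one_mul := by
      intro f
      ext c
      show conv (ofLin Coalgebra.counit) f c = f c
      classical
      set r := Coalgebra.Repr.arbitrary K c
      have key := Coalgebra.sum_counit_tmul_map_eq (f.toLin) c (repr := r)
      have := congrArg (fun z => LinearMap.mul' K K z) key
      simp only [map_sum, LinearMap.mul'_apply, one_mul] at this
      rw [conv_repr _ _ _ r]
      simpa using this
    mul_one := by
      intro f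
      ext c
      show conv f (ofLin Coalgebra.counit) c = f c
      classical
      set r := Coalgebra.Repr.arbitrary K c
      have key := Coalgebra.sum_map_tmul_counit_eq (f.toLin) c (repr := r)
      have := congrArg (fun z => LinearMap.mul' K K z) key
      simp only [map_sum, LinearMap.mul'_apply, mul_one] at this
      rw [conv_repr _ _ _ r]
      simpa using this
    left_distrib := by
      intro f g h
      ext c
      show conv f (g + h) c = conv f g c + conv f h c
      classical
      set r := Coalgebra.Repr.arbitrary K c
      rw [conv_repr _ _ _ r, conv_repr _ _ _ r, conv_repr _ _ _ r, ← Finset.sum_add_distrib]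
      exact Finset.sum_congr rfl fun i _ => by rw [add_apply, mul_add]
    right_distrib := by
      intro f g h
      ext c
      show conv (f + g) h c = conv f h c + conv g h c
      classical
      set r := Coalgebra.Repr.arbitrary K c
      rw [conv_repr _ _ _ r, conv_repr _ _ _ r, conv_repr _ _ _ r, ← Finset.sum_add_distrib]
      exact Finset.sum_congr rfl fun i _ => by rw [add_apply, add_mul]
    zero_mul := by
      intro f
      ext c
      show conv 0 f c = 0
      classical
      rw [conv_repr _ _ _ (Coalgebra.Repr.arbitrary K c)]
      simp
    mul_zero := by
      intro f
      ext c
      show conv f 0 c = 0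
      classical
      rw [conv_repr _ _ _ (Coalgebra.Repr.arbitrary K c)]
      simp }

lemma mul_repr (f g : DualAlg K C) (c : C) {ι : Type*} (r : Coalgebra.Repr K c ι) :
    (f * g) c = ∑ i ∈ r.index, f (r.left i) * g (r.right i) := conv_repr f g c r

@[simp] lemma one_apply (c : C) : (1 : DualAlg K C) c = Coalgebra.counit c := rfl

instance : Algebra K (DualAlg K C) :=
  Algebra.ofModule
    (fun k f g => by
      ext c
      classical
      rw [show (k • f) * g = conv (k • f) g from rfl, conv_repr _ _ _ (Coalgebra.Repr.arbitrary K c)]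
      rw [show k • (f * g) = k • conv f g from rfl]
      rw [smul_apply, conv_repr _ _ _ (Coalgebra.Repr.arbitrary K c), Finset.mul_sum]
      exact Finset.sum_congr rfl fun i _ => by rw [smul_apply]; ring)
    (fun k f g => by
      ext c
      classical
      rw [show f * (k • g) = conv f (k • g) from rfl, conv_repr _ _ _ (Coalgebra.Repr.arbitrary K c)]
      rw [show k • (f * g) = k • conv f g from rfl]
      rw [smul_apply, conv_repr _ _ _ (Coalgebra.Repr.arbitrary K c), Finset.mul_sum]
      exact Finset.sum_congr rfl fun i _ => by rw [smul_apply]; ring)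

end DualAlg

section Actions

variable (K C : Type) [Field K] [AddCommGroup C] [Module K C] [Coalgebra K C]

/-- The right action of the dual algebra on `C`: `c · f = f(c₁) c₂`, coming from the
left comodule structure of `C` over itself. -/
def ract (f : DualAlg K C) : C →ₗ[K] C :=
  (TensorProduct.lid K C).toLinearMap ∘ₗ (f.toLin.rTensor C) ∘ₗ Coalgebra.comul

/-- The left action of the dual algebra on `C`: `f · c = f(c₂) c₁`, coming from the
right comodule structure of `C` over itself. -/
def lact (f : DualAlg K C) : C →ₗ[K] C :=
  (TensorProduct.rid K C).toLinearMap ∘ₗ (f.toLin.lTensor C) ∘ₗ Coalgebra.comul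

variable {K C}

lemma ract_repr (f : DualAlg K C) (c : C) {ι : Type*} (r : Coalgebra.Repr K c ι) :
    ract K C f c = ∑ i ∈ r.index, f (r.left i) • r.right i := by
  show (TensorProduct.lid K C) (f.toLin.rTensor C (Coalgebra.comul c)) = _
  rw [← r.eq]
  simp [map_sum]

lemma lact_repr (f : DualAlg K C) (c : C) {ι : Type*} (r : Coalgebra.Repr K c ι) :
    lact K C f c = ∑ i ∈ r.index, f (r.right i) • r.left i := by
  show (TensorProduct.rid K C) (f.toLin.lTensor C (Coalgebra.comul c)) = _
  rw [← r.eq]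
  simp [map_sum]

variable (K C)

/-- `C` is a right module over its dual algebra (equivalently, a left comodule over itself). -/
instance : Module (DualAlg K C)ᵐᵒᵖ C where
  smul a c := ract K C a.unop c
  one_smul c := by
    show ract K C 1 c = c
    classical
    set r := Coalgebra.Repr.arbitrary K c
    have key := Coalgebra.sum_counit_tmul_eq r
    have := congrArg (fun z => (TensorProduct.lid K C) z) key
    simp only [map_sum, TensorProduct.lid_tmul] at this
    rw [ract_repr _ _ r]
    simpa using this
  mul_smul a b c := by
    show ract K C (b.unop * a.unop) c = ract K C a.unop (ract K C b.unop c)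
    classical
    set g := b.unop
    set f := a.unop
    set r := Coalgebra.Repr.arbitrary K c
    set a₁ : (i : C × C) → Coalgebra.Repr K (r.left i) (C × C) := fun i => Coalgebra.Repr.arbitrary K _
    set a₂ : (i : C × C) → Coalgebra.Repr K (r.right i) (C × C) := fun i => Coalgebra.Repr.arbitrary K _
    have key := Coalgebra.sum_tmul_tmul_eq r a₁ a₂
    have hmap := congrArg (fun z =>
      (TensorProduct.lid K C)
        ((LinearMap.rTensor C (LinearMap.mul' K K ∘ₗ TensorProduct.map g.toLin f.toLin))
          ((TensorProduct.assoc K C C C).symm z))) key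
    simp only [map_sum, TensorProduct.assoc_symm_tmul, LinearMap.rTensor_tmul,
      LinearMap.coe_comp, Function.comp_apply, TensorProduct.map_tmul,
      LinearMap.mul'_apply, TensorProduct.lid_tmul] at hmap
    rw [ract_repr _ _ r]
    calc ∑ i ∈ r.index, (g * f) (r.left i) • r.right i
        = ∑ i ∈ r.index, ∑ j ∈ (a₁ i).index,
            (g ((a₁ i).left j) * f ((a₁ i).right j)) • r.right i := by
          refine Finset.sum_congr rfl fun i _ => ?_
          rw [DualAlg.mul_repr _ _ _ (a₁ i), Finset.sum_smul]
      _ = ∑ i ∈ r.index, ∑ j ∈ (a₂ i).index,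
            (g (r.left i) * f ((a₂ i).left j)) • (a₂ i).right j := hmap
      _ = ract K C f (ract K C g c) := by
          rw [ract_repr g _ r, map_sum]
          refine Finset.sum_congr rfl fun i _ => ?_
          rw [map_smul, ract_repr f _ (a₂ i), Finset.smul_sum]
          exact Finset.sum_congr rfl fun j _ => by rw [smul_smul]
  smul_zero a := map_zero (ract K C a.unop)
  smul_add a x y := map_add (ract K C a.unop) x y
  add_smul a b c := by
    show ract K C (a.unop + b.unop) c = ract K C a.unop c + ract K C b.unop c
    classical
    set r := Coalgebra.Repr.arbitrary K c
    rw [ract_repr _ _ r, ract_repr _ _ r, ract_repr _ _ r, ← Finset.sum_add_distrib]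
    exact Finset.sum_congr rfl fun i _ => by rw [DualAlg.add_apply, add_smul]
  zero_smul c := by
    show ract K C 0 c = 0
    classical
    rw [ract_repr _ _ (Coalgebra.Repr.arbitrary K c)]
    simp

/-- `C` is a left module over its dual algebra (equivalently, a right comodule over itself). -/
instance : Module (DualAlg K C) C where
  smul f c := lact K C f c
  one_smul c := by
    show lact K C 1 c = c
    classical
    set r := Coalgebra.Repr.arbitrary K c
    have key := Coalgebra.sum_tmul_counit_eq r
    have := congrArg (fun z => (TensorProduct.rid K C) z) key
    simp only [map_sum, TensorProduct.rid_tmul] at this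
    rw [lact_repr _ _ r]
    simpa using this
  mul_smul f g c := by
    show lact K C (f * g) c = lact K C f (lact K C g c)
    classical
    set r := Coalgebra.Repr.arbitrary K c
    set a₁ : (i : C × C) → Coalgebra.Repr K (r.left i) (C × C) := fun i => Coalgebra.Repr.arbitrary K _
    set a₂ : (i : C × C) → Coalgebra.Repr K (r.right i) (C × C) := fun i => Coalgebra.Repr.arbitrary K _
    have key := Coalgebra.sum_tmul_tmul_eq r a₁ a₂
    have hmap := congrArg (fun z =>
      (TensorProduct.rid K C)
        ((LinearMap.lTensor C (LinearMap.mul' K K ∘ₗ TensorProduct.map f.toLin g.toLin)) z)) key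
    simp only [map_sum, LinearMap.lTensor_tmul, LinearMap.coe_comp, Function.comp_apply,
      TensorProduct.map_tmul, LinearMap.mul'_apply, TensorProduct.rid_tmul] at hmap
    rw [lact_repr _ _ r]
    calc ∑ i ∈ r.index, (f * g) (r.right i) • r.left i
        = ∑ i ∈ r.index, ∑ j ∈ (a₂ i).index,
            (f ((a₂ i).left j) * g ((a₂ i).right j)) • r.left i := by
          refine Finset.sum_congr rfl fun i _ => ?_
          rw [DualAlg.mul_repr _ _ _ (a₂ i), Finset.sum_smul]
      _ = ∑ i ∈ r.index, ∑ j ∈ (a₁ i).index,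
            (f ((a₁ i).right j) * g (r.right i)) • (a₁ i).left j := hmap.symm
      _ = lact K C f (lact K C g c) := by
          rw [lact_repr g _ r, map_sum]
          refine Finset.sum_congr rfl fun i _ => ?_
          rw [map_smul, lact_repr f _ (a₁ i), Finset.smul_sum]
          refine Finset.sum_congr rfl fun j _ => ?_
          rw [smul_smul, mul_comm]
  smul_zero f := map_zero (lact K C f)
  smul_add f x y := map_add (lact K C f) x y
  add_smul f g c := by
    show lact K C (f + g) c = lact K C f c + lact K C g c
    classical
    set r := Coalgebra.Repr.arbitrary K c
    rw [lact_repr _ _ r, lact_repr _ _ r, lact_repr _ _ r, ← Finset.sum_add_distrib]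
    exact Finset.sum_congr rfl fun i _ => by rw [DualAlg.add_apply, add_smul]
  zero_smul c := by
    show lact K C 0 c = 0
    classical
    rw [lact_repr _ _ (Coalgebra.Repr.arbitrary K c)]
    simp

lemma op_smul_def (f : DualAlg K C) (c : C) : (MulOpposite.op f) • c = ract K C f c := rfl
lemma smul_def' (f : DualAlg K C) (c : C) : f • c = lact K C f c := rfl

instance : IsScalarTower K (DualAlg K C)ᵐᵒᵖ (DualAlg K C) :=
  ⟨fun k a b => by
    show b * (k • a).unop = k • (b * a.unop)
    rw [MulOpposite.unop_smul, mul_smul_comm]⟩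

instance : IsScalarTower K (DualAlg K C)ᵐᵒᵖ C :=
  ⟨fun k a c => by
    show ract K C (k • a.unop) c = k • ract K C a.unop c
    classical
    set r := Coalgebra.Repr.arbitrary K c
    rw [ract_repr _ _ r, ract_repr _ _ r, Finset.smul_sum]
    exact Finset.sum_congr rfl fun i _ => by rw [DualAlg.smul_apply, mul_smul]⟩

instance : IsScalarTower K (DualAlg K C) C :=
  ⟨fun k f c => by
    show lact K C (k • f) c = k • lact K C f c
    classical
    set r := Coalgebra.Repr.arbitrary K c
    rw [lact_repr _ _ r, lact_repr _ _ r, Finset.smul_sum]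
    exact Finset.sum_congr rfl fun i _ => by rw [DualAlg.smul_apply, mul_smul]⟩

instance : SMulCommClass K (DualAlg K C)ᵐᵒᵖ C :=
  ⟨fun k a c => by
    show k • ract K C a.unop c = ract K C a.unop (k • c)
    rw [map_smul]⟩

instance : SMulCommClass K (DualAlg K C) C :=
  ⟨fun k f c => by
    show k • lact K C f c = lact K C f (k • c)
    rw [map_smul]⟩

instance : SMulCommClass (DualAlg K C)ᵐᵒᵖ (DualAlg K C) (DualAlg K C) :=
  ⟨fun a b c => by
    show (b * c) * a.unop = b * (c * a.unop)
    rw [mul_assoc]⟩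

end Actions

section QcF

variable (K C : Type) [Field K] [AddCommGroup C] [Module K C] [Coalgebra K C]

/-- A coalgebra is right quasi-co-Frobenius if there is a monomorphism of right `C*`-modules
from `C` into a direct sum of copies of `C*`. -/
def RightQcF : Prop :=
  ∃ (I : Type) (f : C →ₗ[(DualAlg K C)ᵐᵒᵖ] (I →₀ DualAlg K C)), Function.Injective f

/-- A coalgebra is left quasi-co-Frobenius if there is a monomorphism of left `C*`-modules
from `C` into a direct sum of copies of `C*`. -/
def LeftQcF : Prop :=
  ∃ (I : Type) (f : C →ₗ[DualAlg K C] (I →₀ DualAlg K C)), Function.Injective f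

/-- A coalgebra is quasi-co-Frobenius if it is both left and right quasi-co-Frobenius. -/
def IsQcF : Prop := LeftQcF K C ∧ RightQcF K C

/-- A coalgebra is right co-Frobenius if there is a monomorphism of right `C*`-modules
from `C` into `C*`. -/
def RightCoFrobenius : Prop :=
  ∃ f : C →ₗ[(DualAlg K C)ᵐᵒᵖ] DualAlg K C, Function.Injective f

/-- A coalgebra is left co-Frobenius if there is a monomorphism of left `C*`-modules
from `C` into `C*`. -/
def LeftCoFrobenius : Prop :=
  ∃ f : C →ₗ[DualAlg K C] DualAlg K C, Function.Injective f

/-- A coalgebra is co-Frobenius if it is both left and right co-Frobenius. -/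
def IsCoFrobenius : Prop := LeftCoFrobenius K C ∧ RightCoFrobenius K C

/-- The finite topology on the dual of a coalgebra: the topology induced from the product
topology on `C → K`, where `K` carries the discrete topology.  A basis of neighbourhoods of `0`
is given by the annihilators `F^⊥` of finite-dimensional subspaces `F ⊆ C`. -/
def finiteTopology : TopologicalSpace (DualAlg K C) :=
  TopologicalSpace.induced (fun f => (f : C → K))
    (@Pi.topologicalSpace C (fun _ => K) (fun _ => ⊥))

end QcF

section Rational

variable (K C : Type) [Field K] [AddCommGroup C] [Module K C] [Coalgebra K C]
variable (M : Type) [AddCommGroup M] [Module K M]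

/-- The contraction `M ⊗ C → M` along a functional `f ∈ C*`: `m ⊗ c ↦ f(c) m`. -/
def cntr (f : DualAlg K C) : M ⊗[K] C →ₗ[K] M :=
  (TensorProduct.rid K M).toLinearMap ∘ₗ (f.toLin.lTensor M)

@[simp] lemma cntr_tmul (f : DualAlg K C) (m : M) (c : C) :
    cntr K C M f (m ⊗ₜ[K] c) = f c • m := by
  simp [cntr]

/-- An element `m` of a right `C*`-module is rational if the action of `C*` on it comes from
a "coaction" `ρ(m) = ∑ xᵢ ⊗ cᵢ ∈ M ⊗ C`, i.e. `m · f = ∑ f(cᵢ) xᵢ` for all `f ∈ C*`. -/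
def IsRatRight [Module (DualAlg K C)ᵐᵒᵖ M] (m : M) : Prop :=
  ∃ z : M ⊗[K] C, ∀ f : DualAlg K C, (MulOpposite.op f) • m = cntr K C M f z

/-- An element `m` of a left `C*`-module is rational if the action of `C*` on it comes from
a "coaction" `ρ(m) = ∑ xᵢ ⊗ cᵢ ∈ M ⊗ C`, i.e. `f · m = ∑ f(cᵢ) xᵢ` for all `f ∈ C*`. -/
def IsRatLeft [Module (DualAlg K C) M] (m : M) : Prop :=
  ∃ z : M ⊗[K] C, ∀ f : DualAlg K C, f • m = cntr K C M f z

lemma cntr_mul_ract (g f : DualAlg K C) :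
    cntr K C M (g * f) = (cntr K C M f) ∘ₗ (TensorProduct.map LinearMap.id (ract K C g)) := by
  apply TensorProduct.ext'
  intro m c
  classical
  set r := Coalgebra.Repr.arbitrary K c
  simp only [LinearMap.coe_comp, Function.comp_apply, TensorProduct.map_tmul,
    LinearMap.id_coe, id_eq, cntr_tmul]
  congr 1
  rw [DualAlg.mul_repr _ _ _ r, ract_repr _ _ r]
  show _ = f.toLin _
  rw [map_sum]
  exact Finset.sum_congr rfl fun i _ => by
    rw [map_smul, smul_eq_mul, DualAlg.toLin_apply]

lemma cntr_mul_lact (f g : DualAlg K C) :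
    cntr K C M (f * g) = (cntr K C M f) ∘ₗ (TensorProduct.map LinearMap.id (lact K C g)) := by
  apply TensorProduct.ext'
  intro m c
  classical
  set r := Coalgebra.Repr.arbitrary K c
  simp only [LinearMap.coe_comp, Function.comp_apply, TensorProduct.map_tmul,
    LinearMap.id_coe, id_eq, cntr_tmul]
  congr 1
  rw [DualAlg.mul_repr _ _ _ r, lact_repr _ _ r]
  show _ = f.toLin _
  rw [map_sum]
  refine Finset.sum_congr rfl fun i _ => ?_
  rw [map_smul, smul_eq_mul, DualAlg.toLin_apply, mul_comm]

/-- `Rat(M)`, the largest rational submodule of a right `C*`-module `M`. -/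
def RatR [Module (DualAlg K C)ᵐᵒᵖ M] : Submodule (DualAlg K C)ᵐᵒᵖ M where
  carrier := {m | IsRatRight K C M m}
  zero_mem' := ⟨0, fun f => by simp⟩
  add_mem' := by
    rintro x y ⟨z, hz⟩ ⟨w, hw⟩
    exact ⟨z + w, fun f => by rw [smul_add, hz f, hw f, map_add]⟩
  smul_mem' := by
    rintro a m ⟨z, hz⟩
    refine ⟨(TensorProduct.map LinearMap.id (ract K C a.unop)) z, fun f => ?_⟩
    have h1 : (MulOpposite.op f) • a • m = (MulOpposite.op (a.unop * f)) • m := by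
      rw [MulOpposite.op_mul, mul_smul, MulOpposite.op_unop]
    rw [h1, hz (a.unop * f), cntr_mul_ract]
    rfl

/-- `Rat(M)`, the largest rational submodule of a left `C*`-module `M`. -/
def RatL [Module (DualAlg K C) M] : Submodule (DualAlg K C) M where
  carrier := {m | IsRatLeft K C M m}
  zero_mem' := ⟨0, fun f => by simp⟩
  add_mem' := by
    rintro x y ⟨z, hz⟩ ⟨w, hw⟩
    exact ⟨z + w, fun f => by rw [smul_add, hz f, hw f, map_add]⟩
  smul_mem' := by
    rintro g m ⟨z, hz⟩
    refine ⟨(TensorProduct.map LinearMap.id (lact K C g)) z, fun f => ?_⟩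
    rw [← mul_smul, hz (f * g), cntr_mul_lact]
    rfl

end Rational

section Comodules

variable (K C : Type) [Field K] [AddCommGroup C] [Module K C] [Coalgebra K C]

/-- A left `C`-comodule, viewed as a `K`-vector space together with a compatible rational
right `C*`-module structure. -/
structure LComod where
  M : Type
  [ab : AddCommGroup M]
  [modK : Module K M]
  [modD : Module (DualAlg K C)ᵐᵒᵖ M]
  compat : ∀ (k : K) (m : M), k • m = (MulOpposite.op (algebraMap K (DualAlg K C) k)) • m
  rat : ∀ m : M, IsRatRight K C M m

attribute [instance] LComod.ab LComod.modK LComod.modD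

/-- A right `C`-comodule, viewed as a `K`-vector space together with a compatible rational
left `C*`-module structure. -/
structure RComod where
  M : Type
  [ab : AddCommGroup M]
  [modK : Module K M]
  [modD : Module (DualAlg K C) M]
  compat : ∀ (k : K) (m : M), k • m = (algebraMap K (DualAlg K C) k) • m
  rat : ∀ m : M, IsRatLeft K C M m

attribute [instance] RComod.ab RComod.modK RComod.modD

variable {K C}

/-- A left comodule is simple if it is simple as a (rational) right `C*`-module. -/
def LComod.Simple (X : LComod K C) : Prop := IsSimpleModule (DualAlg K C)ᵐᵒᵖ X.M

/-- A right comodule is simple if it is simple as a (rational) left `C*`-module. -/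
def RComod.Simple (X : RComod K C) : Prop := IsSimpleModule (DualAlg K C) X.M

/-- A left comodule is an injective object if every comodule map into it extends along
monomorphisms of left comodules. -/
def LComod.InjectiveObj (E : LComod K C) : Prop :=
  ∀ (X Y : LComod K C) (i : X.M →ₗ[(DualAlg K C)ᵐᵒᵖ] Y.M), Function.Injective i →
    ∀ f : X.M →ₗ[(DualAlg K C)ᵐᵒᵖ] E.M, ∃ g : Y.M →ₗ[(DualAlg K C)ᵐᵒᵖ] E.M, g ∘ₗ i = f

/-- A right comodule is an injective object if every comodule map into it extends along
monomorphisms of right comodules. -/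
def RComod.InjectiveObj (E : RComod K C) : Prop :=
  ∀ (X Y : RComod K C) (i : X.M →ₗ[DualAlg K C] Y.M), Function.Injective i →
    ∀ f : X.M →ₗ[DualAlg K C] E.M, ∃ g : Y.M →ₗ[DualAlg K C] E.M, g ∘ₗ i = f

/-- `E` is an injective envelope of the left comodule `S`: `E` is injective and `S` embeds
in `E` as an essential subcomodule. -/
def LComod.IsInjEnvelopeOf (E S : LComod K C) : Prop :=
  E.InjectiveObj ∧ ∃ i : S.M →ₗ[(DualAlg K C)ᵐᵒᵖ] E.M, Function.Injective i ∧
    ∀ N : Submodule (DualAlg K C)ᵐᵒᵖ E.M, N ⊓ LinearMap.range i = ⊥ → N = ⊥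

/-- `E` is an injective envelope of the right comodule `S`: `E` is injective and `S` embeds
in `E` as an essential subcomodule. -/
def RComod.IsInjEnvelopeOf (E S : RComod K C) : Prop :=
  E.InjectiveObj ∧ ∃ i : S.M →ₗ[DualAlg K C] E.M, Function.Injective i ∧
    ∀ N : Submodule (DualAlg K C) E.M, N ⊓ LinearMap.range i = ⊥ → N = ⊥

variable (K C)

/-- A coalgebra is right semiperfect if the injective envelope of every simple left comodule
is finite dimensional. -/
def RightSemiperfect : Prop :=
  ∀ S E : LComod K C, S.Simple → E.IsInjEnvelopeOf S → FiniteDimensional K E.M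

/-- A coalgebra is left semiperfect if the injective envelope of every simple right comodule
is finite dimensional. -/
def LeftSemiperfect : Prop :=
  ∀ S E : RComod K C, S.Simple → E.IsInjEnvelopeOf S → FiniteDimensional K E.M

variable {K C}

instance (X : LComod K C) : SMulCommClass K (DualAlg K C)ᵐᵒᵖ X.M :=
  ⟨fun k a m => by
    rw [X.compat k m, X.compat k (a • m), ← mul_smul, ← mul_smul, ← MulOpposite.op_unop a,
      ← MulOpposite.op_mul, ← MulOpposite.op_mul, Algebra.commutes k (MulOpposite.unop a)]⟩

instance (X : RComod K C) : SMulCommClass K (DualAlg K C) X.M :=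
  ⟨fun k a m => by
    rw [X.compat k m, X.compat k (a • m), ← mul_smul, ← mul_smul, Algebra.commutes k a]⟩

end Comodules

section DualModules

variable {K C : Type} [Field K] [AddCommGroup C] [Module K C] [Coalgebra K C]
variable (M : Type) [AddCommGroup M] [Module K M]

/-- The action of an element of (the opposite of) the dual algebra as a `K`-linear map. -/
def opSmulLin [Module (DualAlg K C)ᵐᵒᵖ M] [SMulCommClass K (DualAlg K C)ᵐᵒᵖ M]
    (a : (DualAlg K C)ᵐᵒᵖ) : M →ₗ[K] M where
  toFun m := a • m
  map_add' := smul_add a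
  map_smul' k m := (smul_comm k a m).symm

/-- The action of an element of the dual algebra as a `K`-linear map. -/
def smulLin [Module (DualAlg K C) M] [SMulCommClass K (DualAlg K C) M]
    (a : DualAlg K C) : M →ₗ[K] M where
  toFun m := a • m
  map_add' := smul_add a
  map_smul' k m := (smul_comm k a m).symm

/-- The `K`-linear dual of a right `C*`-module is a left `C*`-module via `(g·φ)(m) = φ(m·g)`. -/
instance dualModuleLeft [Module (DualAlg K C)ᵐᵒᵖ M] [SMulCommClass K (DualAlg K C)ᵐᵒᵖ M] :
    Module (DualAlg K C) (Module.Dual K M) where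
  smul g φ := φ ∘ₗ opSmulLin M (MulOpposite.op g)
  one_smul φ := by ext m; show φ ((MulOpposite.op (1 : DualAlg K C)) • m) = φ m; simp
  mul_smul g h φ := by
    ext m
    show φ ((MulOpposite.op (g * h)) • m) = φ ((MulOpposite.op h) • (MulOpposite.op g) • m)
    rw [← mul_smul, MulOpposite.op_mul]
  smul_zero g := by ext m; rfl
  smul_add g φ ψ := by ext m; rfl
  add_smul g h φ := by
    ext m
    show φ ((MulOpposite.op (g + h)) • m) = φ (MulOpposite.op g • m) + φ (MulOpposite.op h • m)
    rw [show MulOpposite.op (g + h) = MulOpposite.op g + MulOpposite.op h from rfl, add_smul,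
      map_add]
  zero_smul φ := by
    ext m
    show φ ((MulOpposite.op (0 : DualAlg K C)) • m) = 0
    rw [show MulOpposite.op (0 : DualAlg K C) = 0 from rfl, zero_smul, map_zero]

/-- The `K`-linear dual of a left `C*`-module is a right `C*`-module via `(φ·f)(m) = φ(f·m)`. -/
instance dualModuleRight [Module (DualAlg K C) M] [SMulCommClass K (DualAlg K C) M] :
    Module (DualAlg K C)ᵐᵒᵖ (Module.Dual K M) where
  smul a φ := φ ∘ₗ smulLin M a.unop
  one_smul φ := by ext m; show φ ((1 : DualAlg K C) • m) = φ m; simp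
  mul_smul a b φ := by
    ext m
    show φ ((b.unop * a.unop) • m) = φ (b.unop • a.unop • m)
    rw [← mul_smul]
  smul_zero g := by ext m; rfl
  smul_add g φ ψ := by ext m; rfl
  add_smul a b φ := by
    ext m
    show φ ((a.unop + b.unop) • m) = φ (a.unop • m) + φ (b.unop • m)
    rw [add_smul, map_add]
  zero_smul φ := by
    ext m
    show φ ((0 : DualAlg K C) • m) = 0
    rw [zero_smul, map_zero]

end DualModules

section Hopf

variable (K H : Type) [Field K] [Ring H] [HopfAlgebra K H]

/-- The space of left integrals of a Hopf algebra: those `t ∈ H*` with `α * t = α(1) t`. -/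
def leftIntegrals : Submodule K (DualAlg K H) where
  carrier := {t | ∀ a : DualAlg K H, a * t = a (1 : H) • t}
  zero_mem' := by intro a; simp
  add_mem' := by intro x y hx hy a; rw [mul_add, hx a, hy a, smul_add]
  smul_mem' := by intro k x hx a; rw [mul_smul_comm, hx a, smul_comm]

/-- The space of right integrals of a Hopf algebra: those `t ∈ H*` with `t * α = α(1) t`. -/
def rightIntegrals : Submodule K (DualAlg K H) where
  carrier := {t | ∀ a : DualAlg K H, t * a = a (1 : H) • t}
  zero_mem' := by intro a; simp
  add_mem' := by intro x y hx hy a; rw [add_mul, hx a, hy a, smul_add]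
  smul_mem' := by intro k x hx a; rw [smul_mul_assoc, hx a, smul_comm]

/-- `x ↦ x ⇀ t`, i.e. `(x ⇀ t)(y) = t(yx)`, as a linear map `H → H*`. -/
def intMap (t : DualAlg K H) : H →ₗ[K] DualAlg K H where
  toFun x := DualAlg.ofLin (t.toLin ∘ₗ LinearMap.mulRight K x)
  map_add' x y := by
    apply DualAlg.ext; intro z
    show t.toLin (z * (x + y)) = t.toLin (z * x) + t.toLin (z * y)
    rw [mul_add, map_add]
  map_smul' k x := by
    apply DualAlg.ext; intro z
    show t.toLin (z * (k • x)) = k * t.toLin (z * x)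
    rw [mul_smul_comm, map_smul, smul_eq_mul]

/-- The twisted left coaction `x ↦ a S(x₂) ⊗ x₁` on `H`, for `a ∈ H`. -/
def aCoaction (a : H) : H →ₗ[K] H ⊗[K] H :=
  (TensorProduct.map ((LinearMap.mulLeft K a) ∘ₗ (HopfAlgebra.antipode (R := K))) LinearMap.id)
    ∘ₗ (TensorProduct.comm K H H).toLinearMap ∘ₗ Coalgebra.comul

/-- The right `H*`-action on `ᵃH` associated to the twisted coaction `x ↦ a S(x₂) ⊗ x₁`:
`x · f = f(a S(x₂)) x₁`. -/
def aAction (a : H) (f : DualAlg K H) : H →ₗ[K] H :=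
  (TensorProduct.lid K H).toLinearMap ∘ₗ (f.toLin.rTensor H) ∘ₗ aCoaction K H a

end Hopf

/-!
As a right `C*`-module, `C` is quasi-injective: a `C*`-linear map `π : D → C` on a subcomodule is
left multiplication by any functional extending `ε ∘ π`. Moreover every cyclic submodule of `C` is
finite dimensional. In such a module a maximal essential extension of a cyclic submodule is a direct
summand, and a Zorn argument yields an independent family of such summands `E` whose sum `S` is
essential. It is all of `C`: for `c ∈ C`, the intersection of `S` with the finite-dimensional
submodule generated by `c` lies in a finite subsum, which is again a summand, and the component
of `c` in a complement of that subsum generates a submodule disjoint from `S`, so it vanishes.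

Given an embedding `C → (C*)^I`, finitely many coordinates are already injective on the
finite-dimensional essential cyclic submodule of a summand `E`, hence on `E`. Collecting these
coordinates over all summands embeds `C = ⨁ E` into `(C*)^(J)`.
-/

universe u

theorem sSupIndep.insert {α : Type*} [CompleteLattice α] [IsModularLattice α] {s : Set α} {a : α}
    (hs : sSupIndep s) (ha : Disjoint a (sSup s)) : sSupIndep (insert a s) := by
  intro b hb
  by_cases hba : b = a
  · subst hba
    exact ha.mono_right (sSup_le_sSup fun x hx => hx.1.resolve_left hx.2)
  have hb : b ∈ s := hb.resolve_left hba
  rw [Set.insert_sdiff_of_notMem s (Set.notMem_singleton_iff.mpr (Ne.symm hba)), sSup_insert,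
    sup_comm]
  exact (hs hb).disjoint_sup_right_of_disjoint_sup_left
    (ha.symm.mono_left (sup_le (le_sSup hb) (sSup_le_sSup Set.sdiff_subset)))

namespace Submodule

variable {R M : Type*} [Ring R] [AddCommGroup M] [Module R M]

def IsEssentialIn (V E : Submodule R M) : Prop :=
  V ≤ E ∧ ∀ N ≤ E, Disjoint N V → N = ⊥

theorem isEssentialIn_refl (V : Submodule R M) : V.IsEssentialIn V :=
  ⟨le_rfl, fun _ hN hdisj => hdisj.eq_bot_of_le hN⟩

theorem IsEssentialIn.trans {U V W : Submodule R M} (hUV : U.IsEssentialIn V)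
    (hVW : V.IsEssentialIn W) : U.IsEssentialIn W := by
  refine ⟨hUV.1.trans hVW.1, fun N hNW hNU => hVW.2 N hNW ?_⟩
  exact disjoint_iff.mpr (hUV.2 _ inf_le_right (hNU.mono_left inf_le_left))

theorem IsEssentialIn.disjoint {V E S : Submodule R M} (h : V.IsEssentialIn E)
    (hVS : Disjoint V S) : Disjoint E S :=
  disjoint_iff.mpr <| h.2 _ inf_le_left (hVS.mono_right inf_le_right).symm

theorem exists_maximal_isEssentialIn (V : Submodule R M) : ∃ E, Maximal V.IsEssentialIn E := by
  obtain ⟨E, -, hE⟩ := zorn_le_nonempty₀ {E | V.IsEssentialIn E} (fun c hc hchain W hW => by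
    refine ⟨sSup c, ⟨(hc hW).1.trans (le_sSup hW), fun N hN hNV => ?_⟩, fun _ => le_sSup⟩
    rw [← inf_eq_left.mpr hN, hchain.directedOn.inf_sSup_eq]
    exact iSup₂_eq_bot.mpr fun E hE => (hc hE).2 _ inf_le_right (hNV.mono_left inf_le_left))
    V (isEssentialIn_refl V)
  exact ⟨E, hE⟩

def IsCyclicHull (E : Submodule R M) : Prop :=
  (∃ x, (R ∙ x).IsEssentialIn E) ∧ ∃ ρ : M →ₗ[R] M, LinearMap.IsProj E ρ

end Submodule

namespace Module

def IsQuasiInjective (R M : Type*) [Ring R] [AddCommGroup M] [Module R M] : Prop :=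
  ∀ (D : Submodule R M) (g : D →ₗ[R] M), ∃ ψ : M →ₗ[R] M, ψ ∘ₗ D.subtype = g

namespace IsQuasiInjective

variable {R M : Type*} [Ring R] [AddCommGroup M] [Module R M] (hM : IsQuasiInjective R M)
include hM

theorem exists_proj_of_disjoint {A B : Submodule R M} (hAB : Disjoint A B) :
    ∃ ψ : M →ₗ[R] M, (∀ a ∈ A, ψ a = a) ∧ ∀ b ∈ B, ψ b = 0 := by
  let f : M →ₗ.[R] M := ⟨A, A.subtype⟩
  let g : M →ₗ.[R] M := ⟨B, 0⟩
  have agree : ∀ (a : f.domain) (b : g.domain), (a : M) = b → f a = g b := fun a b hab =>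
    Submodule.disjoint_def.mp hAB a a.2 (hab ▸ b.2)
  obtain ⟨ψ, hψ⟩ := hM _ (f.sup g agree).toFun
  have hψ' (a : A) (b : B) : ψ (a + b) = a := by
    have hab := Submodule.add_mem_sup a.2 b.2
    calc ψ (a + b) = f.sup g agree ⟨a + b, hab⟩ := LinearMap.congr_fun hψ ⟨a + b, hab⟩
      _ = f a + g b := LinearPMap.sup_apply agree a b _ rfl
      _ = a := by simp [f, g]
  exact ⟨ψ, fun a ha => by simpa using hψ' ⟨a, ha⟩ 0, fun b hb => by simpa using hψ' 0 ⟨b, hb⟩⟩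

theorem exists_isProj_sup {A B : Submodule R M} (hAB : Disjoint A B) {ρA ρB : M →ₗ[R] M}
    (hA : LinearMap.IsProj A ρA) (hB : LinearMap.IsProj B ρB) :
    ∃ ρ : M →ₗ[R] M, LinearMap.IsProj (A ⊔ B) ρ := by
  obtain ⟨ψ, hψA, hψB⟩ := hM.exists_proj_of_disjoint hAB
  refine ⟨ρA ∘ₗ ψ + ρB ∘ₗ (LinearMap.id - ψ), fun x => ?_, fun x hx => ?_⟩
  · exact Submodule.add_mem_sup (hA.map_mem _) (hB.map_mem _)
  · refine (sup_le (fun a ha => ?_) (fun b hb => ?_) :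
      A ⊔ B ≤ LinearMap.eqLocus _ LinearMap.id) hx
    · simp [hψA a ha, hA.map_id a ha]
    · simp [hψB b hb, hB.map_id b hb]

theorem exists_isProj_finset_sup {𝒜 : Set (Submodule R M)} (h𝒜 : sSupIndep 𝒜)
    (hproj : ∀ E ∈ 𝒜, ∃ ρ : M →ₗ[R] M, LinearMap.IsProj E ρ) (t : Finset (Submodule R M))
    (ht : ↑t ⊆ 𝒜) : ∃ ρ : M →ₗ[R] M, LinearMap.IsProj (t.sup id) ρ := by
  classical
  induction t using Finset.induction_on with
  | empty => exact ⟨0, fun _ => zero_mem _, fun x hx => by simpa using hx.symm⟩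
  | insert E t hE ih =>
    rw [Finset.coe_insert, Set.insert_subset_iff] at ht
    obtain ⟨ρE, hρE⟩ := hproj E ht.1
    obtain ⟨ρt, hρt⟩ := ih ht.2
    have hdisj : Disjoint E (t.sup id) := by
      rw [Finset.sup_id_eq_sSup]
      exact h𝒜.disjoint_sSup ht.1 ht.2 hE
    rw [Finset.sup_insert]
    exact hM.exists_isProj_sup hdisj hρE hρt

theorem exists_isProj_of_maximal {V E : Submodule R M} (hE : Maximal V.IsEssentialIn E) :
    ∃ ρ : M →ₗ[R] M, LinearMap.IsProj E ρ := by
  obtain ⟨T, -, hT⟩ := zorn_le_nonempty₀ {T | Disjoint E T} (fun c hc hchain _ _ =>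
    ⟨sSup c, hchain.directedOn.disjoint_sSup_right.mpr hc, fun _ => le_sSup⟩) ⊥ disjoint_bot_right
  obtain ⟨ψ, hψE, hψT⟩ := hM.exists_proj_of_disjoint hT.1
  have hE_range : E ≤ LinearMap.range ψ := fun e he => ⟨e, hψE e he⟩
  have h_ess : E.IsEssentialIn (LinearMap.range ψ) := by
    refine ⟨hE_range, fun N hN hNE => ?_⟩
    have hcomap : N.comap ψ ≤ T := hT.2 (Submodule.disjoint_def.mpr fun x hxE hxN => ?_)
      (fun t ht => by simp [hψT t ht])
    · rw [eq_bot_iff]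
      rintro _ hn
      obtain ⟨x, rfl⟩ := hN hn
      exact (Submodule.mem_bot R).mpr (hψT x (hcomap hn))
    · exact Submodule.disjoint_def.mp hNE x (by simpa [hψE x hxE] using hxN) hxE
  have h_range : LinearMap.range ψ = E :=
    le_antisymm (hE.2 (hE.1.trans h_ess) hE_range) hE_range
  exact ⟨ψ, fun x => h_range ▸ LinearMap.mem_range_self ψ x, hψE⟩

theorem exists_isCyclicHull (x : M) :
    ∃ E : Submodule R M, (R ∙ x).IsEssentialIn E ∧ E.IsCyclicHull := by
  obtain ⟨E, hE⟩ := Submodule.exists_maximal_isEssentialIn (R ∙ x)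
  exact ⟨E, hE.1, ⟨x, hE.1⟩, hM.exists_isProj_of_maximal hE⟩

theorem sSup_eq_top (hfg : ∀ x : M, IsNoetherian R (R ∙ x)) {𝒜 : Set (Submodule R M)}
    (h𝒜 : sSupIndep 𝒜) (hproj : ∀ E ∈ 𝒜, ∃ ρ : M →ₗ[R] M, LinearMap.IsProj E ρ)
    (hess : ∀ x : M, Disjoint (R ∙ x) (sSup 𝒜) → x = 0) : sSup 𝒜 = ⊤ := by
  refine Submodule.eq_top_iff'.mpr fun c => ?_
  set D := R ∙ c
  have hD : (D ⊓ sSup 𝒜).FG := by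
    rw [← Submodule.map_comap_subtype]
    exact (IsNoetherian.noetherian _).map _
  obtain ⟨t, ht𝒜, hDt⟩ := (CompleteLattice.isCompactElement_iff_exists_le_sSup_of_le_sSup _ _).mp
    ((Submodule.fg_iff_compact _).mp hD) 𝒜 inf_le_right
  obtain ⟨ρ, hρ⟩ := hM.exists_isProj_finset_sup h𝒜 hproj t ht𝒜
  have ht : t.sup id ≤ sSup 𝒜 := by
    rw [Finset.sup_id_eq_sSup]
    exact sSup_le_sSup ht𝒜
  have hc : c - ρ c = 0 := by
    refine hess _ (Submodule.disjoint_def.mpr fun z hz hzS => ?_)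
    obtain ⟨r, rfl⟩ := Submodule.mem_span_singleton.mp hz
    have hrc : r • c ∈ D ⊓ sSup 𝒜 := by
      refine ⟨Submodule.smul_mem _ r (Submodule.mem_span_singleton_self c), ?_⟩
      have := add_mem hzS (ht (hρ.map_mem (r • c)))
      rwa [smul_sub, map_smul, sub_add_cancel] at this
    rw [smul_sub, ← map_smul, hρ.map_id _ (hDt hrc), sub_self]
  rw [sub_eq_zero] at hc
  exact hc ▸ ht (hρ.map_mem c)

theorem exists_sSupIndep_isCyclicHull (hfg : ∀ x : M, IsNoetherian R (R ∙ x)) :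
    ∃ 𝒜 : Set (Submodule R M), sSupIndep 𝒜 ∧ sSup 𝒜 = ⊤ ∧ ∀ E ∈ 𝒜, E.IsCyclicHull := by
  obtain ⟨𝒜, h𝒜⟩ := zorn_subset {𝒜 : Set (Submodule R M) | sSupIndep 𝒜 ∧ ∀ E ∈ 𝒜, E.IsCyclicHull}
    fun c hc hchain => ⟨⋃₀ c, ⟨iSupIndep_sUnion_of_directed hchain.directedOn
      fun 𝒜 h𝒜 => (hc h𝒜).1, fun E ⟨𝒜, h𝒜, hE⟩ => (hc h𝒜).2 E hE⟩,
      fun _ => Set.subset_sUnion_of_mem⟩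
  refine ⟨𝒜, h𝒜.1.1, hM.sSup_eq_top hfg h𝒜.1.1 (fun E hE => (h𝒜.1.2 E hE).2) fun x hx => ?_,
    h𝒜.1.2⟩
  obtain ⟨E, hxE, hE⟩ := hM.exists_isCyclicHull x
  have hdisj : Disjoint E (sSup 𝒜) := hxE.disjoint hx
  have hE𝒜 : E ∈ 𝒜 := h𝒜.2 ⟨h𝒜.1.1.insert hdisj, Set.forall_mem_insert.mpr ⟨hE, h𝒜.1.2⟩⟩
    (Set.subset_insert E 𝒜) (Set.mem_insert E 𝒜)
  have hE_bot : E = ⊥ := hdisj.eq_bot_of_le (le_sSup hE𝒜)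
  simpa [hE_bot] using hxE.1 (Submodule.mem_span_singleton_self x)

end IsQuasiInjective

end Module

section Embedding

variable {R M N : Type*} [Ring R] [AddCommGroup M] [Module R M] [AddCommGroup N] [Module R N]

theorem exists_finset_disjoint_iInf_ker {I : Type*} (V : Submodule R M) [IsArtinian R V]
    (f : M →ₗ[R] I → N) (hf : Function.Injective f) :
    ∃ t : Finset I, Disjoint V (⨅ i ∈ t, LinearMap.ker (LinearMap.proj i ∘ₗ f)) := by
  obtain ⟨t, ht⟩ := Finset.exists_inf_eq_iInf
    fun i => LinearMap.ker (LinearMap.proj i ∘ₗ f ∘ₗ V.subtype)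
  refine ⟨t, Submodule.disjoint_def.mpr fun x hxV hxt => ?_⟩
  have hx : (⟨x, hxV⟩ : V) ∈ t.inf fun i => LinearMap.ker (LinearMap.proj i ∘ₗ f ∘ₗ V.subtype) := by
    simpa [Submodule.mem_finsetInf] using hxt
  rw [ht, Submodule.mem_iInf] at hx
  exact (injective_iff_map_eq_zero f).mp hf x (funext fun i => by simpa using hx i)

theorem Submodule.IsEssentialIn.exists_injective_finsupp {I : Type u} {V E : Submodule R M}
    (hVE : V.IsEssentialIn E) [IsArtinian R V] (f : M →ₗ[R] I → N) (hf : Function.Injective f) :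
    ∃ (J : Type u) (g : E →ₗ[R] J →₀ N), Function.Injective g := by
  obtain ⟨t, ht⟩ := exists_finset_disjoint_iInf_ker V f hf
  have hE : E ⊓ ⨅ i ∈ t, LinearMap.ker (LinearMap.proj i ∘ₗ f) = ⊥ :=
    hVE.2 _ inf_le_left (ht.symm.mono_left inf_le_right)
  refine ⟨t, (Finsupp.linearEquivFunOnFinite R N t).symm.toLinearMap ∘ₗ
    LinearMap.pi fun i : t => LinearMap.proj (i : I) ∘ₗ f ∘ₗ E.subtype, ?_⟩
  refine (injective_iff_map_eq_zero _).mpr fun x hx => Subtype.ext ?_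
  have hx' : (x : M) ∈ E ⊓ ⨅ i ∈ t, LinearMap.ker (LinearMap.proj i ∘ₗ f) := by
    refine ⟨x.2, ?_⟩
    simpa [Submodule.mem_iInf, funext_iff] using hx
  simpa [hE] using hx'

theorem DirectSum.IsInternal.exists_injective_finsupp {ι : Type u} [DecidableEq ι]
    {A : ι → Submodule R M} (hA : DirectSum.IsInternal A)
    (h : ∀ i, ∃ (J : Type u) (g : A i →ₗ[R] J →₀ N), Function.Injective g) :
    ∃ (J : Type u) (g : M →ₗ[R] J →₀ N), Function.Injective g := by
  choose J g hg using h
  let e := LinearEquiv.ofBijective (DirectSum.coeLinearMap A) hA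
  refine ⟨Σ i, J i, (sigmaFinsuppLequivDFinsupp R).symm.toLinearMap ∘ₗ
    DFinsupp.mapRange.linearMap g ∘ₗ e.symm.toLinearMap, ?_⟩
  exact (sigmaFinsuppLequivDFinsupp R).symm.injective.comp
    (((DFinsupp.mapRange_injective _ fun i => map_zero (g i)).mpr hg).comp e.symm.injective)

end Embedding

theorem Module.IsQuasiInjective.exists_injective_finsupp {R : Type*} {M : Type u} [Ring R]
    [AddCommGroup M] [Module R M] (hM : Module.IsQuasiInjective R M)
    (hfg : ∀ x : M, IsNoetherian R (R ∙ x)) (hart : ∀ x : M, IsArtinian R (R ∙ x))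
    {N : Type*} [AddCommGroup N] [Module R N] {I : Type u} (f : M →ₗ[R] I → N)
    (hf : Function.Injective f) : ∃ (J : Type u) (g : M →ₗ[R] J →₀ N), Function.Injective g := by
  classical
  obtain ⟨𝒜, h𝒜, htop, hhull⟩ := hM.exists_sSupIndep_isCyclicHull hfg
  have hA : DirectSum.IsInternal ((↑) : 𝒜 → Submodule R M) :=
    DirectSum.isInternal_submodule_of_iSupIndep_of_iSup_eq_top ((sSupIndep_iff 𝒜).mp h𝒜)
      (by rwa [← sSup_eq_iSup'])
  refine hA.exists_injective_finsupp fun E => ?_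
  obtain ⟨x, hx⟩ := (hhull E E.2).1
  have := hart x
  exact hx.exists_injective_finsupp f hf

namespace DualAlg

variable {K C : Type} [Field K] [AddCommGroup C] [Module K C] [Coalgebra K C]

theorem lact_ract_comm (α f : DualAlg K C) (c : C) :
    lact K C α (ract K C f c) = ract K C f (lact K C α c) := by
  classical
  set r := Coalgebra.Repr.arbitrary K c
  set a₁ : (i : C × C) → Coalgebra.Repr K (r.left i) (C × C) := fun i => .arbitrary K _
  set a₂ : (i : C × C) → Coalgebra.Repr K (r.right i) (C × C) := fun i => .arbitrary K _
  have hcoassoc := congrArg (fun z : C ⊗[K] (C ⊗[K] C) =>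
    TensorProduct.lid K C (f.toLin.rTensor C
      ((TensorProduct.rid K C ∘ₗ α.toLin.lTensor C).lTensor C z)))
    (Coalgebra.sum_tmul_tmul_eq r a₁ a₂)
  simp only [map_sum, LinearMap.lTensor_tmul, LinearMap.coe_comp, Function.comp_apply,
    LinearEquiv.coe_coe, TensorProduct.rid_tmul, LinearMap.rTensor_tmul,
    TensorProduct.lid_tmul, DualAlg.toLin_apply] at hcoassoc
  calc lact K C α (ract K C f c)
      = ∑ i ∈ r.index, ∑ j ∈ (a₂ i).index,
          f (r.left i) • α ((a₂ i).right j) • (a₂ i).left j := by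
        simp only [ract_repr _ c r, map_sum, map_smul, lact_repr _ _ (a₂ _), Finset.smul_sum]
    _ = ∑ i ∈ r.index, ∑ j ∈ (a₁ i).index,
          f ((a₁ i).left j) • α (r.right i) • (a₁ i).right j := hcoassoc.symm
    _ = ract K C f (lact K C α c) := by
        simp only [lact_repr _ c r, map_sum, map_smul, ract_repr _ _ (a₁ _), Finset.smul_sum]
        exact Finset.sum_congr rfl fun i _ => Finset.sum_congr rfl fun j _ => smul_comm _ _ _

instance : SMulCommClass (DualAlg K C) (DualAlg K C)ᵐᵒᵖ C :=
  ⟨fun α f c => lact_ract_comm α f.unop c⟩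

theorem exists_comul_eq_sum_basis {ι : Type*} (b : Module.Basis ι K C) (c : C) :
    ∃ a : ι →₀ C, (a.sum fun i n => b i ⊗ₜ[K] n) = Coalgebra.comul c ∧
      ∀ i, a i = op (ofLin (b.coord i)) • c := by
  classical
  obtain ⟨a, ha⟩ := TensorProduct.eq_repr_basis_left b (Coalgebra.comul (R := K) c)
  refine ⟨a, ha, fun i => ?_⟩
  have := congrArg (TensorProduct.lid K C ∘ (b.coord i).rTensor C) ha
  simp only [Function.comp_apply, map_finsuppSum, LinearMap.rTensor_tmul,
    TensorProduct.lid_tmul, Module.Basis.coord_apply, Module.Basis.repr_self,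
    Finsupp.single_apply, ite_smul, one_smul, zero_smul, Finsupp.sum_ite_self_eq'] at this
  exact this

theorem smul_eq_sum_basis {ι : Type*} (b : Module.Basis ι K C) (α : DualAlg K C) {c : C}
    {a : ι →₀ C} (ha : (a.sum fun i n => b i ⊗ₜ[K] n) = Coalgebra.comul c) :
    α • c = a.sum fun i n => α n • b i := by
  rw [smul_def', lact, LinearMap.comp_apply, LinearMap.comp_apply, ← ha]
  simp [Finsupp.sum]

theorem isQuasiInjective : Module.IsQuasiInjective (DualAlg K C)ᵐᵒᵖ C := by
  intro D π
  obtain ⟨g, hg⟩ := LinearMap.exists_extend (p := D.restrictScalars K)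
    ((Coalgebra.counit : C →ₗ[K] K) ∘ₗ π.restrictScalars K)
  set α : DualAlg K C := ofLin g
  have hα (d : D) : α d = Coalgebra.counit (π d) := LinearMap.congr_fun hg d
  refine ⟨DistribSMul.toLinearMap _ C α, LinearMap.ext fun d => ?_⟩
  let b := Module.Basis.ofVectorSpace K C
  obtain ⟨a, ha, ha_coeff⟩ := exists_comul_eq_sum_basis b (d : C)
  obtain ⟨a', ha', ha'_coeff⟩ := exists_comul_eq_sum_basis b (π d)
  have hmem (i) : a i ∈ D := ha_coeff i ▸ D.smul_mem _ d.2
  have hπ (i) : a' i = π ⟨a i, hmem i⟩ := by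
    rw [ha'_coeff, ← π.map_smul]
    exact congrArg π (Subtype.ext (ha_coeff i).symm)
  have hsupp : a'.support ⊆ a.support := fun i hi => by
    rw [Finsupp.mem_support_iff] at hi ⊢
    contrapose! hi
    rw [hπ, show (⟨a i, hmem i⟩ : D) = 0 from Subtype.ext hi, map_zero]
  calc α • (d : C) = a.sum fun i n => α n • b i := smul_eq_sum_basis b α ha
    _ = a'.sum fun i n => Coalgebra.counit n • b i := by
      rw [Finsupp.sum_of_support_subset a' hsupp _ (fun _ _ => by simp)]
      exact Finset.sum_congr rfl fun i _ => by rw [hπ, ← hα]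
    _ = (1 : DualAlg K C) • π d := (smul_eq_sum_basis b 1 ha').symm
    _ = π d := one_smul _ _

theorem finiteDimensional_span_singleton (c : C) :
    FiniteDimensional K ((DualAlg K C)ᵐᵒᵖ ∙ c) := by
  classical
  let r := Coalgebra.Repr.arbitrary K c
  have hle : ((DualAlg K C)ᵐᵒᵖ ∙ c).restrictScalars K ≤ Submodule.span K (r.right '' r.index) := by
    intro x hx
    obtain ⟨f, rfl⟩ := Submodule.mem_span_singleton.mp hx
    rw [← MulOpposite.op_unop f, op_smul_def, ract_repr _ c r]
    exact Submodule.sum_mem _ fun i hi =>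
      Submodule.smul_mem _ _ (Submodule.subset_span (Set.mem_image_of_mem _ hi))
  have := FiniteDimensional.span_of_finite K (r.index.finite_toSet.image r.right)
  exact Submodule.finiteDimensional_of_le hle

theorem isNoetherian_span_singleton (c : C) :
    IsNoetherian (DualAlg K C)ᵐᵒᵖ ((DualAlg K C)ᵐᵒᵖ ∙ c) :=
  have := finiteDimensional_span_singleton (K := K) c
  isNoetherian_of_tower K inferInstance

theorem isArtinian_span_singleton (c : C) :
    IsArtinian (DualAlg K C)ᵐᵒᵖ ((DualAlg K C)ᵐᵒᵖ ∙ c) :=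
  have := finiteDimensional_span_singleton (K := K) c
  isArtinian_of_tower K inferInstance

end DualAlg

variable (K C : Type) [Field K] [AddCommGroup C] [Module K C] [Coalgebra K C]

/-- A coalgebra is right quasi-co-Frobenius if and only if it is right torsionless, i.e.
there is a monomorphism of right `C*`-modules `C → (C*)^I` into a direct product of
copies of `C*`. -/
theorem rightQcF_iff_torsionless :
    RightQcF K C ↔
      ∃ (I : Type) (f : C →ₗ[(DualAlg K C)ᵐᵒᵖ] (I → DualAlg K C)), Function.Injective f := by
  constructor
  · rintro ⟨I, g, hg⟩
    exact ⟨I, Finsupp.lcoeFun ∘ₗ g, DFunLike.coe_injective.comp hg⟩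
  · rintro ⟨I, f, hf⟩
    exact DualAlg.isQuasiInjective.exists_injective_finsupp DualAlg.isNoetherian_span_singleton
      DualAlg.isArtinian_span_singleton f hf
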